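/- Let m, k, l, N be positive integers with m > 1, k ∤ m and 1 ≤ l < k. Then the generalized Wronskian–Hermite polynomial W_N^{[m,k,l]}(z) is a monic polynomial in z of degree Γ = N((k−1)(N−1)+2l)/2. -/

import Mathlib

/-!
In the Leibniz expansion of the determinant, the entry in row `i` and column `j` has degree at
most `a j - i`, where `a j = k j + l`, and its coefficient of `z^(a j - i)` is
`1/(a j - i)! = a_j(a_j - 1)⋯(a_j - i + 1)/(a j)!`. Hence every term has degree at most
`∑ a j - ∑ i = Γ`, and the coefficient of `z^Γ` is the determinant of these leading
coefficients.
After pulling the factors `1/(a j)!` out of the columns, the falling factorials give the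
Vandermonde determinant of the nodes `k j + l`, which is `k^(N(N-1)/2) ∏ i!`; the normalising
constant `c_N` cancels exactly this product, so the coefficient is `1`.
-/

open scoped BigOperators

/-- `pPoly m j` is the polynomial `p_j^{[m]}(z) = ∑_{i=0}^{⌊j/m⌋} z^{j-im}/(i!(j-im)!)`
for `j ≥ 0`, and `0` for `j < 0`. -/
noncomputable def pPoly (m : ℕ) : ℤ → Polynomial ℂ := fun j =>
  if 0 ≤ j then
    ∑ i ∈ Finset.range (j.toNat / m + 1),
      Polynomial.C (((Nat.factorial i * Nat.factorial (j.toNat - i * m) : ℕ) : ℂ))⁻¹ *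
        Polynomial.X ^ (j.toNat - i * m)
  else 0

/-- The normalizing constant `c_N^{[m,k,l]} = k^{-N(N-1)/2} ∏_{i=1}^{N} (k(i-1)+l)!/(i-1)!`. -/
noncomputable def cConst (k l N : ℕ) : ℂ :=
  ((k : ℂ) ^ (N * (N - 1) / 2))⁻¹ *
    ∏ i ∈ Finset.range N, ((Nat.factorial (k * i + l) : ℂ) / ((Nat.factorial i : ℕ) : ℂ))

/-- The generalized Wronskian–Hermite polynomial
`W_N^{[m,k,l]}(z) = c_N^{[m,k,l]} · det_{1≤i,j≤N} ( p^{[m]}_{k(j-1)+l-i+1}(z) )`. -/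
noncomputable def WPoly (m k l N : ℕ) : Polynomial ℂ :=
  Polynomial.C (cConst k l N) *
    Matrix.det (Matrix.of fun i j : Fin N =>
      pPoly m (((k * (j : ℕ) + l : ℕ) : ℤ) - ((i : ℕ) : ℤ)))

open Polynomial Finset

namespace Polynomial

theorem coeff_prod_sum_of_natDegree_le {R ι : Type*} [CommSemiring R] (s : Finset ι)
    (f : ι → R[X]) (d : ι → ℕ) (h : ∀ i ∈ s, (f i).natDegree ≤ d i) :
    (∏ i ∈ s, f i).coeff (∑ i ∈ s, d i) = ∏ i ∈ s, (f i).coeff (d i) := by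
  classical
  induction s using Finset.induction_on with
  | empty => simp
  | insert i s hi ih =>
    have hs : ∀ j ∈ s, (f j).natDegree ≤ d j := fun j hj => h j (mem_insert_of_mem hj)
    rw [prod_insert hi, sum_insert hi, prod_insert hi,
      coeff_mul_add_eq_of_natDegree_le (h i (mem_insert_self i s))
        ((natDegree_prod_le _ _).trans (sum_le_sum hs)), ih hs]

end Polynomial

namespace Matrix

section DegreeBound

variable {n R : Type*} [Fintype n]

theorem natDegree_prod_perm_le_and_coeff [CommSemiring R] (M : Matrix n n R[X]) (a b : n → ℕ)
    (h : ∀ i j, M i j ≠ 0 → (M i j).natDegree + b i ≤ a j) (σ : Equiv.Perm n) :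
    (∏ j, M (σ j) j).natDegree ≤ ∑ j, a j - ∑ i, b i ∧
      (∏ j, M (σ j) j).coeff (∑ j, a j - ∑ i, b i) =
        ∏ j, (M (σ j) j).coeff (a j - b (σ j)) := by
  by_cases hz : ∃ j, M (σ j) j = 0
  · obtain ⟨j, hj⟩ := hz
    have hcoeff : (M (σ j) j).coeff (a j - b (σ j)) = 0 := by rw [hj, coeff_zero]
    rw [prod_eq_zero (f := fun j => M (σ j) j) (mem_univ j) hj,
      prod_eq_zero (f := fun j => (M (σ j) j).coeff (a j - b (σ j))) (mem_univ j) hcoeff]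
    simp
  push Not at hz
  have hle : ∀ j, b (σ j) ≤ a j := fun j => by have := h _ _ (hz j); omega
  have hsum : ∑ j, (a j - b (σ j)) = ∑ j, a j - ∑ i, b i := by
    rw [← Equiv.sum_comp σ b, eq_tsub_iff_add_eq_of_le (sum_le_sum fun j _ => hle j),
      ← sum_add_distrib]
    exact sum_congr rfl fun j _ => Nat.sub_add_cancel (hle j)
  have hdeg : ∀ j ∈ univ, (M (σ j) j).natDegree ≤ a j - b (σ j) := fun j _ => by
    have := h _ _ (hz j); omega
  rw [← hsum]
  exact ⟨(natDegree_prod_le _ _).trans (sum_le_sum hdeg),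
    coeff_prod_sum_of_natDegree_le _ _ _ hdeg⟩

variable [DecidableEq n] [CommRing R]

theorem natDegree_det_le_of_natDegree_le (M : Matrix n n R[X]) (a b : n → ℕ)
    (h : ∀ i j, M i j ≠ 0 → (M i j).natDegree + b i ≤ a j) :
    M.det.natDegree ≤ ∑ j, a j - ∑ i, b i := by
  rw [det_apply']
  refine natDegree_sum_le_of_forall_le _ _ fun σ _ => ?_
  rw [← C_eq_intCast]
  exact (natDegree_C_mul_le _ _).trans (natDegree_prod_perm_le_and_coeff M a b h σ).1

/-- Where `a j < b i` the truncated index `a j - b i` is harmless: `h` forces `M i j = 0`. -/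
theorem coeff_det_of_natDegree_le (M : Matrix n n R[X]) (a b : n → ℕ)
    (h : ∀ i j, M i j ≠ 0 → (M i j).natDegree + b i ≤ a j) :
    M.det.coeff (∑ j, a j - ∑ i, b i) = (of fun i j => (M i j).coeff (a j - b i)).det := by
  rw [det_apply', det_apply', finsetSum_coeff]
  refine sum_congr rfl fun σ _ => ?_
  rw [coeff_intCast_mul, (natDegree_prod_perm_le_and_coeff M a b h σ).2]
  rfl

end DegreeBound

section Vandermonde

variable {R : Type*} [CommRing R]

theorem det_descFactorial_eq_det_vandermonde [IsDomain R] {N : ℕ} (v : Fin N → ℕ) :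
    (of fun i j : Fin N => ((v j).descFactorial i : R)).det =
      (vandermonde fun j => (v j : R)).det := by
  rw [det_eval_matrixOfPolynomials_eq_det_vandermonde _ (fun i => descPochhammer R i)
    (fun i => descPochhammer_natDegree R i) (fun i => monic_descPochhammer R i),
    ← det_transpose]
  congr 1
  ext i j
  simp [descPochhammer_eval_eq_descFactorial]

theorem det_vandermonde_const_mul {N : ℕ} (c : R) (v : Fin N → R) :
    (vandermonde fun i => c * v i).det = c ^ (N * (N - 1) / 2) * (vandermonde v).det := by
  have h : vandermonde (fun i => c * v i) =
      vandermonde v * diagonal fun j : Fin N => c ^ (j : ℕ) := by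
    ext i j
    simp [vandermonde_apply, mul_pow, mul_comm]
  rw [h, det_mul, det_diagonal, prod_pow_eq_pow_sum, Fin.sum_univ_eq_sum_range (fun j => j),
    sum_range_id, mul_comm]

theorem det_vandermonde_natCast (N : ℕ) :
    (vandermonde fun i : Fin N => (i : R)).det = ∏ i ∈ range N, (i.factorial : R) := by
  cases N with
  | zero => simp
  | succ n =>
    rw [det_vandermonde_id_eq_superFactorial, ← Nat.prod_range_succ_factorial, Nat.cast_prod]

end Vandermonde

end Matrix

theorem pPoly_of_neg (m : ℕ) {j : ℤ} (hj : j < 0) : pPoly m j = 0 := by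
  simp [pPoly, not_le.mpr hj]

theorem natDegree_pPoly_le (m : ℕ) (j : ℤ) : (pPoly m j).natDegree ≤ j.toNat := by
  unfold pPoly
  split
  · exact natDegree_sum_le_of_forall_le _ _ fun i _ =>
      (natDegree_C_mul_X_pow_le _ _).trans (Nat.sub_le _ _)
  · simp

theorem coeff_pPoly_toNat (m : ℕ) {j : ℤ} (hj : 0 ≤ j) :
    (pPoly m j).coeff j.toNat = (j.toNat.factorial : ℂ)⁻¹ := by
  rw [pPoly, if_pos hj, finsetSum_coeff, sum_eq_single 0]
  · simp [coeff_C_mul, coeff_X_pow]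
  · intro i hi hi0
    have hm : m ≠ 0 := by rintro rfl; simp_all
    have him : i * m ≤ j.toNat :=
      (Nat.le_div_iff_mul_le (Nat.pos_of_ne_zero hm)).mp (Nat.lt_succ_iff.mp (mem_range.mp hi))
    have : 0 < i * m := Nat.mul_pos (Nat.pos_of_ne_zero hi0) (Nat.pos_of_ne_zero hm)
    rw [coeff_C_mul, coeff_X_pow, if_neg (by omega), mul_zero]
  · simp

theorem natDegree_pPoly_natCast_sub_add_le (m a i : ℕ) (h : pPoly m ((a : ℤ) - i) ≠ 0) :
    (pPoly m ((a : ℤ) - i)).natDegree + i ≤ a := by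
  have hia : i ≤ a := by
    by_contra hai
    exact h (pPoly_of_neg m (by omega))
  have := natDegree_pPoly_le m ((a : ℤ) - i)
  omega

theorem coeff_pPoly_natCast_sub (m a i : ℕ) :
    (pPoly m ((a : ℤ) - i)).coeff (a - i) = (a.descFactorial i : ℂ) / a.factorial := by
  rcases lt_or_ge a i with hai | hia
  · rw [pPoly_of_neg m (by omega), Nat.descFactorial_eq_zero_iff_lt.mpr hai]
    simp
  · have h := coeff_pPoly_toNat m (j := (a : ℤ) - i) (by omega)
    rw [show ((a : ℤ) - i).toNat = a - i by omega] at h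
    have : ((a - i).factorial : ℂ) ≠ 0 := Nat.cast_ne_zero.mpr (Nat.factorial_ne_zero _)
    have : (a.descFactorial i : ℂ) ≠ 0 :=
      Nat.cast_ne_zero.mpr (Nat.descFactorial_pos.mpr hia).ne'
    rw [h, ← Nat.factorial_mul_descFactorial hia]
    push_cast
    field_simp

theorem sum_fin_affine_sub_sum_fin (k l N : ℕ) (hk : k ≠ 0) :
    ∑ j : Fin N, (k * j + l) - ∑ i : Fin N, (i : ℕ) = N * ((k - 1) * (N - 1) + 2 * l) / 2 := by
  obtain ⟨k, rfl⟩ := Nat.exists_eq_succ_of_ne_zero hk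
  have hS := sum_range_id_mul_two N
  rw [Fin.sum_univ_eq_sum_range (fun j => (k + 1) * j + l),
    Fin.sum_univ_eq_sum_range (fun i => i), sum_add_distrib, ← mul_sum, sum_const, card_range,
    smul_eq_mul]
  symm
  apply Nat.div_eq_of_eq_mul_left two_pos
  rw [show (k + 1) * (∑ i ∈ range N, i) + N * l - ∑ i ∈ range N, i
      = k * (∑ i ∈ range N, i) + N * l by rw [add_mul, one_mul]; omega]
  rw [Nat.succ_sub_one, add_mul, mul_assoc, hS]
  ring

theorem natDegree_WPoly_le (m k l N : ℕ) :
    (WPoly m k l N).natDegree ≤ ∑ j : Fin N, (k * j + l) - ∑ i : Fin N, (i : ℕ) :=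
  (natDegree_C_mul_le _ _).trans <| Matrix.natDegree_det_le_of_natDegree_le _ _ _
    fun i j => natDegree_pPoly_natCast_sub_add_le m (k * j + l) i

theorem det_leadingCoeff_WPoly (m k l N : ℕ) :
    (Matrix.of fun i j : Fin N =>
      (pPoly m (((k * j + l : ℕ) : ℤ) - i)).coeff (k * j + l - i)).det =
      (∏ j : Fin N, ((k * j + l).factorial : ℂ))⁻¹ *
        ((k : ℂ) ^ (N * (N - 1) / 2) * ∏ i ∈ range N, (i.factorial : ℂ)) := by
  simp_rw [coeff_pPoly_natCast_sub, div_eq_inv_mul]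
  have hcol := Matrix.det_mul_row (fun j : Fin N => ((k * j + l).factorial : ℂ)⁻¹)
    (Matrix.of fun i j : Fin N => ((k * j + l).descFactorial i : ℂ))
  simp only [Matrix.of_apply] at hcol
  rw [hcol, prod_inv_distrib, Matrix.det_descFactorial_eq_det_vandermonde]
  push_cast
  rw [Matrix.det_vandermonde_add (fun j => (k : ℂ) * j), Matrix.det_vandermonde_const_mul,
    Matrix.det_vandermonde_natCast]

theorem coeff_WPoly (m k l N : ℕ) (hk : k ≠ 0) :
    (WPoly m k l N).coeff (∑ j : Fin N, (k * j + l) - ∑ i : Fin N, (i : ℕ)) = 1 := by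
  rw [WPoly, coeff_C_mul, Matrix.coeff_det_of_natDegree_le
    (Matrix.of fun i j : Fin N => pPoly m (((k * j + l : ℕ) : ℤ) - i)) (fun j => k * j + l)
    (fun i => i) fun i j => natDegree_pPoly_natCast_sub_add_le m (k * j + l) i]
  simp only [Matrix.of_apply]
  rw [det_leadingCoeff_WPoly, cConst, prod_div_distrib,
    Fin.prod_univ_eq_prod_range (fun j => ((k * j + l).factorial : ℂ))]
  have : (k : ℂ) ≠ 0 := Nat.cast_ne_zero.mpr hk
  have : ∏ i ∈ range N, ((k * i + l).factorial : ℂ) ≠ 0 :=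
    prod_ne_zero_iff.mpr fun i _ => Nat.cast_ne_zero.mpr (Nat.factorial_ne_zero _)
  have : ∏ i ∈ range N, (i.factorial : ℂ) ≠ 0 :=
    prod_ne_zero_iff.mpr fun i _ => Nat.cast_ne_zero.mpr (Nat.factorial_ne_zero _)
  field_simp

theorem wronskianHermite_monic_of_degree_Gamma
    (m k l N : ℕ) (hlk : l < k) :
    (WPoly m k l N).Monic ∧
      (WPoly m k l N).natDegree = N * ((k - 1) * (N - 1) + 2 * l) / 2 := by
  have hk : k ≠ 0 := by omega
  have hdeg := natDegree_WPoly_le m k l N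
  have hcoeff := coeff_WPoly m k l N hk
  rw [← sum_fin_affine_sub_sum_fin k l N hk]
  exact ⟨monic_of_natDegree_le_of_coeff_eq_one _ hdeg hcoeff,
    natDegree_eq_of_le_of_coeff_ne_zero hdeg (hcoeff ▸ one_ne_zero)⟩
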